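/- (KL bound for Lipschitz logit maps.) Let E be a real normed vector space, V a nonempty finite type, L ≥ 0, and z : E → (V → ℝ) a logit map satisfying the Lipschitz condition (∑_{i ∈ V} (z θ₁ i − z θ₂ i)²)^(1/2) ≤ L * ‖θ₁ − θ₂‖ for all θ₁ θ₂ : E, where the norm on V → ℝ is Euclidean. Then for all θ₁ θ₂ : E, KL(softmax (z θ₁) ‖ softmax (z θ₂)) ≤ (L² / 4) * ‖θ₁ − θ₂‖². -/

import Mathlib

open Real MeasureTheory ProbabilityTheory Finset

/-!
With `p = softmax a` and `u = b - a`, the Kullback–Leibler divergence of `softmax a` from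
`softmax b` equals `log 𝔼_p[exp u] - 𝔼_p[u]`, the cumulant generating function at `1` of the
centred variable `u - 𝔼_p[u]`. Hoeffding's lemma bounds it by `(max u - min u)² / 8`, and
`(max u - min u)² ≤ 2 ∑ᵢ uᵢ²`, so the divergence is at most `‖a - b‖² / 4`.
-/

theorem log_sum_mul_exp_sub_sum_mul_le {V : Type*} [Fintype V] {p : V → ℝ}
    (hp : ∀ i, 0 ≤ p i) (hp1 : ∑ i, p i = 1) {u : V → ℝ} {m M : ℝ}
    (hu : ∀ i, u i ∈ Set.Icc m M) :
    log (∑ i, p i * exp (u i)) - ∑ i, p i * u i ≤ (M - m) ^ 2 / 8 := by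
  let _ : MeasurableSpace V := ⊤
  let μ : Measure V := (PMF.ofFintype (fun i ↦ ENNReal.ofReal (p i))
    (by rw [← ENNReal.ofReal_sum_of_nonneg fun i _ ↦ hp i, hp1, ENNReal.ofReal_one])).toMeasure
  have integral_eq_sum (f : V → ℝ) : ∫ i, f i ∂μ = ∑ i, p i * f i := by
    simp [μ, PMF.integral_eq_sum, ENNReal.toReal_ofReal (hp _)]
  have hoeffding := hasSubgaussianMGF_of_mem_Icc (μ := μ) Measurable.of_discrete.aemeasurable
    (ae_of_all _ hu)
  have mgf_eq :
      mgf (fun i ↦ u i - μ[u]) μ 1 = (∑ i, p i * exp (u i)) * exp (-∑ i, p i * u i) := by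
    simp only [mgf, integral_eq_sum, one_mul, sub_eq_add_neg, exp_add, sum_mul, mul_assoc]
  have hpos : 0 < ∑ i, p i * exp (u i) := by
    have hmgf := mgf_pos (hoeffding.integrable_exp_mul 1)
    rw [mgf_eq] at hmgf
    exact pos_of_mul_pos_left hmgf (exp_pos _).le
  have hcgf := hoeffding.cgf_le 1
  rw [cgf, mgf_eq, log_mul hpos.ne' (exp_pos _).ne', log_exp] at hcgf
  norm_num [div_pow, sq_abs] at hcgf
  linarith

theorem sq_sub_le_two_mul_sum_sq {V : Type*} [Fintype V] (u : V → ℝ) (i j : V) :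
    (u i - u j) ^ 2 ≤ 2 * ∑ k, u k ^ 2 := by
  classical
  rcases eq_or_ne i j with rfl | hij
  · simpa using sum_nonneg fun k _ ↦ sq_nonneg (u k)
  · have hpair : u i ^ 2 + u j ^ 2 ≤ ∑ k, u k ^ 2 := by
      simpa [sum_pair hij] using
        sum_le_univ_sum_of_nonneg (s := {i, j}) fun k ↦ sq_nonneg (u k)
    nlinarith [sq_nonneg (u i + u j)]

section Softmax

variable {V : Type*} [Fintype V]

noncomputable def softmax (x : V → ℝ) (i : V) : ℝ := exp (x i) / ∑ j, exp (x j)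

variable [Nonempty V]

theorem sum_exp_pos (x : V → ℝ) : 0 < ∑ j, exp (x j) :=
  sum_pos (fun _ _ ↦ exp_pos _) univ_nonempty

theorem softmax_pos (x : V → ℝ) (i : V) : 0 < softmax x i :=
  div_pos (exp_pos _) (sum_exp_pos x)

theorem sum_softmax (x : V → ℝ) : ∑ i, softmax x i = 1 := by
  simp only [softmax, ← sum_div, div_self (sum_exp_pos x).ne']

theorem sum_softmax_mul_log_div_softmax (a b : V → ℝ) :
    ∑ i, softmax a i * log (softmax a i / softmax b i) =
      log (∑ i, softmax a i * exp (b i - a i)) - ∑ i, softmax a i * (b i - a i) := by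
  have hZa := (sum_exp_pos a).ne'
  have hZb := (sum_exp_pos b).ne'
  have hmgf : ∑ i, softmax a i * exp (b i - a i) = (∑ j, exp (b j)) / ∑ j, exp (a j) := by
    simp only [softmax, exp_sub, sum_div]
    exact sum_congr rfl fun i _ ↦ by field_simp
  have hlog (i : V) : log (softmax a i / softmax b i) =
      log ((∑ j, exp (b j)) / ∑ j, exp (a j)) - (b i - a i) := by
    rw [softmax, softmax, div_div_div_comm, ← exp_sub,
      log_div (exp_pos _).ne' (div_ne_zero hZa hZb), log_exp,
      ← inv_div (∑ j, exp (a j)), log_inv]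
    ring
  simp only [hlog, hmgf, mul_sub, sum_sub_distrib, ← sum_mul, sum_softmax, one_mul]

theorem sum_softmax_mul_log_div_softmax_le (a b : V → ℝ) :
    ∑ i, softmax a i * log (softmax a i / softmax b i) ≤ (∑ i, (a i - b i) ^ 2) / 4 := by
  let u (i : V) : ℝ := b i - a i
  obtain ⟨iM, -, hM⟩ := exists_max_image univ u univ_nonempty
  obtain ⟨im, -, hm⟩ := exists_min_image univ u univ_nonempty
  have hu (i : V) : u i ∈ Set.Icc (u im) (u iM) := ⟨hm i (mem_univ i), hM i (mem_univ i)⟩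
  have hoeffding : log (∑ i, softmax a i * exp (u i)) - ∑ i, softmax a i * u i ≤
      (u iM - u im) ^ 2 / 8 :=
    log_sum_mul_exp_sub_sum_mul_le (fun i ↦ (softmax_pos a i).le) (sum_softmax a) hu
  have hspread : (u iM - u im) ^ 2 ≤ 2 * ∑ i, (a i - b i) ^ 2 := calc
    (u iM - u im) ^ 2 = ((a im - b im) - (a iM - b iM)) ^ 2 := by ring
    _ ≤ 2 * ∑ i, (a i - b i) ^ 2 := sq_sub_le_two_mul_sum_sq (fun i ↦ a i - b i) im iM
  rw [sum_softmax_mul_log_div_softmax]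
  linarith

end Softmax

theorem kl_softmax_le_of_lipschitz_logits_general
    {E : Type*} [NormedAddCommGroup E]
    {V : Type*} [Fintype V] [Nonempty V]
    (L : ℝ) (z : E → V → ℝ)
    (hz : ∀ θ₁ θ₂ : E,
      Real.sqrt (∑ i, (z θ₁ i - z θ₂ i) ^ 2) ≤ L * ‖θ₁ - θ₂‖) :
    ∀ θ₁ θ₂ : E,
      ∑ i, (Real.exp (z θ₁ i) / ∑ j, Real.exp (z θ₁ j)) *
          Real.log ((Real.exp (z θ₁ i) / ∑ j, Real.exp (z θ₁ j)) /
            (Real.exp (z θ₂ i) / ∑ j, Real.exp (z θ₂ j))) ≤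
        (L ^ 2 / 4) * ‖θ₁ - θ₂‖ ^ 2 := by
  intro θ₁ θ₂
  have hsq : ∑ i, (z θ₁ i - z θ₂ i) ^ 2 ≤ (L * ‖θ₁ - θ₂‖) ^ 2 :=
    (sqrt_le_iff.mp (hz θ₁ θ₂)).2
  calc ∑ i, softmax (z θ₁) i * log (softmax (z θ₁) i / softmax (z θ₂) i)
      ≤ (∑ i, (z θ₁ i - z θ₂ i) ^ 2) / 4 := sum_softmax_mul_log_div_softmax_le _ _
    _ ≤ (L * ‖θ₁ - θ₂‖) ^ 2 / 4 := by gcongr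
    _ = L ^ 2 / 4 * ‖θ₁ - θ₂‖ ^ 2 := by ring

/-- KL bound for Lipschitz logit maps: if the logit map `z : E → (V → ℝ)` is `L`-Lipschitz
in the Euclidean norm on `V → ℝ`, then for all `θ₁ θ₂`,
`KL(softmax (z θ₁) ‖ softmax (z θ₂)) ≤ (L² / 4) * ‖θ₁ − θ₂‖²`. -/
theorem kl_softmax_le_of_lipschitz_logits
    {E : Type*} [NormedAddCommGroup E] [NormedSpace ℝ E]
    {V : Type*} [Fintype V] [Nonempty V]
    (L : ℝ) (hL : 0 ≤ L) (z : E → V → ℝ)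
    (hz : ∀ θ₁ θ₂ : E,
      Real.sqrt (∑ i, (z θ₁ i - z θ₂ i) ^ 2) ≤ L * ‖θ₁ - θ₂‖) :
    ∀ θ₁ θ₂ : E,
      ∑ i, (Real.exp (z θ₁ i) / ∑ j, Real.exp (z θ₁ j)) *
          Real.log ((Real.exp (z θ₁ i) / ∑ j, Real.exp (z θ₁ j)) /
            (Real.exp (z θ₂ i) / ∑ j, Real.exp (z θ₂ j))) ≤
        (L ^ 2 / 4) * ‖θ₁ - θ₂‖ ^ 2 :=
  kl_softmax_le_of_lipschitz_logits_general L z hz
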